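/- For all words u, v over Y₀, the asymptotic leading coefficients satisfy C^−_u · C^−_v = C^−_{u⧢v} = C^−_{u⊎v}, where C^− is extended linearly to polynomials and C^−_{u⧢v} (resp. C^−_{u⊎v}) is the linear extension applied to the shuffle (resp. quasi-shuffle) product; here only the words of maximal total degree (weight plus length) in u⊎v contribute, since C^−_P for a homogeneous-by-degree decomposition picks the top degree component. -/

import Mathlib

/-- Shuffle product of two words over `Y₀` (lists of indices), as a multiset of words. -/
def shuffles : List ℕ → List ℕ → Multiset (List ℕ)
  | [], v => {v}
  | i :: u, [] => {i :: u}
  | i :: u, j :: v =>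
      ((shuffles u (j :: v)).map (i :: ·)) + ((shuffles (i :: u) v).map (j :: ·))
  termination_by u v => u.length + v.length

/-- Quasi-shuffle (stuffle) product of two words over `Y₀`, as a multiset of words:
`y_i u ⊎ y_j v = y_i(u ⊎ y_j v) + y_j(y_i u ⊎ v) + y_{i+j}(u ⊎ v)`. -/
def stuffle : List ℕ → List ℕ → Multiset (List ℕ)
  | [], v => {v}
  | i :: u, [] => {i :: u}
  | i :: u, j :: v =>
      ((stuffle u (j :: v)).map (i :: ·)) + ((stuffle (i :: u) v).map (j :: ·))
        + ((stuffle u v).map ((i + j) :: ·))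
  termination_by u v => u.length + v.length

/-- The total degree `(w) + |w|` (weight plus length) of a word. -/
def deg (w : List ℕ) : ℕ := w.sum + w.length

/-- `C^−_w = Π over nonempty suffixes v of w of 1/((v)+|v|)`. -/
noncomputable def Cneg (w : List ℕ) : ℝ :=
  ∏ i ∈ Finset.range w.length, ((deg (w.drop i) : ℕ) : ℝ)⁻¹

/-- The linear extension of `C^−` to a (multiset encoding of a) polynomial: only the words
of maximal total degree `(w)+|w|` contribute. -/
noncomputable def CnegM (ms : Multiset (List ℕ)) : ℝ :=
  ((ms.filter (fun w => deg w = (ms.map deg).sup)).map Cneg).sum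

/-!
Put `a = deg (y_i u)` and `b = deg (y_j v)`. Every word of `y_i u ⧢ y_j v` has degree `a + b`, and
`C^−_{y_k w} = C^−_w / deg (y_k w)`, so by the shuffle recursion and induction
`Σ_{w ∈ y_i u ⧢ y_j v} C^−_w = (a + b)⁻¹ (C^−_u C^−_{y_j v} + C^−_{y_i u} C^−_v)
  = (a + b)⁻¹ (b⁻¹ + a⁻¹) C^−_u C^−_v = C^−_{y_i u} C^−_{y_j v}`.
In the quasi-shuffle the contraction terms `y_{i+j}(u ⊎ v)` have one letter fewer, hence strictly
smaller degree, so the top-degree part of `u ⊎ v` is exactly `u ⧢ v`.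
-/

lemma deg_cons (i : ℕ) (w : List ℕ) : deg (i :: w) = deg w + (i + 1) := by
  simp only [deg, List.sum_cons, List.length_cons]
  omega

lemma Cneg_nil : Cneg [] = 1 := by
  simp [Cneg]

lemma Cneg_cons (i : ℕ) (w : List ℕ) : Cneg (i :: w) = (deg (i :: w) : ℝ)⁻¹ * Cneg w := by
  rw [Cneg, List.length_cons, Finset.prod_range_succ']
  simp [Cneg, mul_comm]

lemma append_mem_shuffles (u v : List ℕ) : u ++ v ∈ shuffles u v := by
  fun_induction shuffles u v <;> simp_all

lemma deg_eq_of_mem_shuffles {u v w : List ℕ} (hw : w ∈ shuffles u v) :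
    deg w = deg u + deg v := by
  fun_induction shuffles u v generalizing w with
  | case1 v => simp_all [deg]
  | case2 i u => simp_all [deg]
  | case3 i u j v ih₁ ih₂ =>
    simp only [Multiset.mem_add, Multiset.mem_map] at hw
    rcases hw with ⟨w, hw, rfl⟩ | ⟨w, hw, rfl⟩
    · simp only [deg_cons, ih₁ hw]; ring
    · simp only [deg_cons, ih₂ hw]; ring

lemma sum_map_Cneg_cons {s : Multiset (List ℕ)} {i D : ℕ} (hs : ∀ w ∈ s, deg (i :: w) = D) :
    ((s.map (i :: ·)).map Cneg).sum = (D : ℝ)⁻¹ * (s.map Cneg).sum := by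
  rw [Multiset.map_map, ← Multiset.sum_map_mul_left]
  exact congrArg _ <| Multiset.map_congr rfl fun w hw => by
    simp only [Function.comp_apply, Cneg_cons, hs w hw]

lemma sum_map_Cneg_shuffles (u v : List ℕ) :
    ((shuffles u v).map Cneg).sum = Cneg u * Cneg v := by
  fun_induction shuffles u v with
  | case1 v => simp [Cneg_nil]
  | case2 i u => simp [Cneg_nil]
  | case3 i u j v ih₁ ih₂ =>
    have hdeg₁ : ∀ w ∈ shuffles u (j :: v), deg (i :: w) = deg (i :: u) + deg (j :: v) :=
      fun w hw => by simp only [deg_cons, deg_eq_of_mem_shuffles hw]; ring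
    have hdeg₂ : ∀ w ∈ shuffles (i :: u) v, deg (j :: w) = deg (i :: u) + deg (j :: v) :=
      fun w hw => by simp only [deg_cons, deg_eq_of_mem_shuffles hw]; ring
    have ha : (deg (i :: u) : ℝ) ≠ 0 := by rw [deg_cons]; positivity
    have hb : (deg (j :: v) : ℝ) ≠ 0 := by rw [deg_cons]; positivity
    have hab : (deg (i :: u) : ℝ) + deg (j :: v) ≠ 0 := by rw [deg_cons]; positivity
    rw [Multiset.map_add, Multiset.sum_add, sum_map_Cneg_cons hdeg₁, sum_map_Cneg_cons hdeg₂,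
      ih₁, ih₂, Cneg_cons i u, Cneg_cons j v]
    push_cast
    field_simp

lemma deg_le_of_mem_stuffle {u v w : List ℕ} (hw : w ∈ stuffle u v) :
    deg w ≤ deg u + deg v := by
  fun_induction stuffle u v generalizing w with
  | case1 v => simp_all [deg]
  | case2 i u => simp_all [deg]
  | case3 i u j v ih₁ ih₂ ih₃ =>
    simp only [Multiset.mem_add, Multiset.mem_map] at hw
    rcases hw with (⟨w, hw, rfl⟩ | ⟨w, hw, rfl⟩) | ⟨w, hw, rfl⟩
    · have := ih₁ hw; simp only [deg_cons] at *; omega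
    · have := ih₂ hw; simp only [deg_cons] at *; omega
    · have := ih₃ hw; simp only [deg_cons] at *; omega

lemma filter_stuffle_deg_eq (u v : List ℕ) :
    (stuffle u v).filter (fun w => deg w = deg u + deg v) = shuffles u v := by
  fun_induction stuffle u v with
  | case1 v => simp [shuffles, deg]
  | case2 i u => simp [shuffles, deg]
  | case3 i u j v ih₁ ih₂ _ =>
    have hcontract : (stuffle u v).filter
        (fun w => deg ((i + j) :: w) = deg (i :: u) + deg (j :: v)) = 0 :=
      Multiset.filter_eq_nil.2 fun w hw => by
        have := deg_le_of_mem_stuffle hw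
        simp only [deg_cons]
        omega
    simp only [shuffles, Multiset.filter_add, Multiset.filter_map, Function.comp_def]
    rw [hcontract, Multiset.map_zero, add_zero, ← ih₁, ← ih₂]
    congr 2 <;> exact Multiset.filter_congr fun w _ => by simp only [deg_cons]; omega

lemma CnegM_eq_of_deg_le {ms : Multiset (List ℕ)} {D : ℕ} (hle : ∀ w ∈ ms, deg w ≤ D)
    {w₀ : List ℕ} (hw₀ : w₀ ∈ ms) (hD : deg w₀ = D) :
    CnegM ms = ((ms.filter (fun w => deg w = D)).map Cneg).sum := by
  have hsup : (ms.map deg).sup = D :=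
    le_antisymm (Multiset.sup_le.2 <| by simpa using hle)
      (hD ▸ Multiset.le_sup (Multiset.mem_map_of_mem _ hw₀))
  rw [CnegM, hsup]

/-- For all words `u, v` over `Y₀`: `C^−_u · C^−_v = C^−_{u⧢v} = C^−_{u⊎v}`, where `C^−` is
extended linearly (picking the top total-degree component) to the shuffle and quasi-shuffle
products. -/
theorem stmt13 (u v : List ℕ) :
    Cneg u * Cneg v = CnegM (shuffles u v) ∧
    Cneg u * Cneg v = CnegM (stuffle u v) := by
  have hshuffle : u ++ v ∈ shuffles u v := append_mem_shuffles u v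
  have hdeg : deg (u ++ v) = deg u + deg v := deg_eq_of_mem_shuffles hshuffle
  have hstuffle : u ++ v ∈ stuffle u v :=
    Multiset.mem_of_mem_filter (filter_stuffle_deg_eq u v ▸ hshuffle)
  constructor
  · rw [CnegM_eq_of_deg_le (fun w hw => (deg_eq_of_mem_shuffles hw).le) hshuffle hdeg,
      Multiset.filter_eq_self.2 fun w hw => deg_eq_of_mem_shuffles hw, sum_map_Cneg_shuffles]
  · rw [CnegM_eq_of_deg_le (fun w hw => deg_le_of_mem_stuffle hw) hstuffle hdeg,
      filter_stuffle_deg_eq, sum_map_Cneg_shuffles]
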